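/- arXiv:2209.11989 — 8 statements merged into one kernel-verified Lean document; each statement's English description precedes it below -/
import Mathlib

section
/- Let H be a real Hilbert space, L > 0, and let A : H → H be L-Lipschitz continuous. Let μ ∈ (0,1), λ₁ > 0, let (pₙ)ₙ≥₁ be nonnegative reals with P := ∑_{n=1}^∞ pₙ < ∞, let (μₙ)ₙ≥₁ be nonnegative reals, and let (wₙ), (yₙ) be arbitrary sequences in H. Define λₙ₊₁ := min{(μ + μₙ)‖wₙ − yₙ‖ / ‖Awₙ − Ayₙ‖, λₙ + pₙ} if Awₙ ≠ Ayₙ, and λₙ₊₁ := λₙ + pₙ otherwise. Then min{μ/L, λ₁} ≤ λₙ ≤ λ₁ + P for every n ≥ 1, and the sequence (λₙ) converges to some λ ∈ [min{μ/L, λ₁}, λ₁ + P]. -/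
open Filter
open scoped Topology RealInnerProductSpace Classical

/-!
Every step size is either `λₙ + pₙ` or, when `Awₙ ≠ Ayₙ`, the smaller of that and a ratio which
Lipschitz continuity bounds below by `μ / L`; so `min (μ / L) λₙ` never decreases, while
`λₙ ≤ λ₁ + ∑ pₖ`. Convergence follows because `λₙ - ∑_{k<n} pₖ` is antitone and bounded below,
and the partial sums of `pₖ` converge.
-/

open Finset

section QuasiAntitone

variable {u p : ℕ → ℝ}

theorem antitone_sub_sum_range_of_le_add (h : ∀ n, u (n + 1) ≤ u n + p n) :
    Antitone fun n => u n - ∑ k ∈ range n, p k :=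
  antitone_nat_of_succ_le fun n => by rw [sum_range_succ]; linarith [h n]

theorem le_add_tsum_of_le_add (hp₀ : ∀ n, 0 ≤ p n) (hp : Summable p)
    (h : ∀ n, u (n + 1) ≤ u n + p n) (n : ℕ) : u n ≤ u 0 + ∑' k, p k := by
  have hmono := antitone_sub_sum_range_of_le_add h (Nat.zero_le n)
  simp only [range_zero, sum_empty, sub_zero] at hmono
  linarith [hp.sum_le_tsum (range n) (fun k _ => hp₀ k)]

theorem exists_tendsto_of_le_add_of_summable (hp : Summable p)
    (h : ∀ n, u (n + 1) ≤ u n + p n) (hu : BddBelow (Set.range u)) :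
    ∃ l, Tendsto u atTop (𝓝 l) := by
  set c : ℕ → ℝ := fun n => u n - ∑ k ∈ range n, p k
  have hsum : Tendsto (fun n => ∑ k ∈ range n, p k) atTop (𝓝 (∑' k, p k)) :=
    hp.hasSum.tendsto_sum_nat
  obtain ⟨b, hb⟩ := hu
  obtain ⟨B, hB⟩ := hsum.bddAbove_range
  have hc : BddBelow (Set.range c) :=
    ⟨b - B, Set.forall_mem_range.2 fun n =>
      sub_le_sub (hb (Set.mem_range_self n)) (hB (Set.mem_range_self n))⟩
  exact ⟨_, ((tendsto_atTop_ciInf (antitone_sub_sum_range_of_le_add h) hc).add hsum).congr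
    fun n => sub_add_cancel _ _⟩

end QuasiAntitone

theorem min_le_of_forall_min_le_succ {α : Type*} [LinearOrder α] {u : ℕ → α} {a : α}
    (h : ∀ n, min a (u n) ≤ u (n + 1)) (n : ℕ) : min a (u 0) ≤ u n := by
  induction n with
  | zero => exact min_le_right _ _
  | succ n ih => exact (le_min (min_le_left _ _) ih).trans (h n)

theorem div_le_mul_norm_sub_div_norm_sub {E F : Type*} [SeminormedAddCommGroup E]
    [SeminormedAddCommGroup F] {A : E → F} {L μ ν : ℝ} (hL : 0 < L)
    (hA : ∀ x y, ‖A x - A y‖ ≤ L * ‖x - y‖) (hμ : 0 ≤ μ) (hμν : μ ≤ ν) {x y : E}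
    (hxy : 0 < ‖A x - A y‖) : μ / L ≤ ν * ‖x - y‖ / ‖A x - A y‖ := by
  rw [div_le_div_iff₀ hL hxy]
  calc μ * ‖A x - A y‖ ≤ μ * (L * ‖x - y‖) := mul_le_mul_of_nonneg_left (hA x y) hμ
    _ ≤ ν * ‖x - y‖ * L := by
      linarith [mul_nonneg (mul_nonneg (sub_nonneg.2 hμν) (norm_nonneg (x - y))) hL.le]

theorem stmt_0_general
    {H : Type*} [NormedAddCommGroup H]
    (L : ℝ) (hL : 0 < L) (A : H → H)
    (hALip : ∀ x y : H, ‖A x - A y‖ ≤ L * ‖x - y‖)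
    (μ : ℝ) (hμ : μ ∈ Set.Ioo (0 : ℝ) 1)
    (p μ' lam : ℕ → ℝ) (w y : ℕ → H)
    (hp : ∀ n, 1 ≤ n → 0 ≤ p n)
    (hpsum : Summable (fun n => p (n + 1)))
    (P : ℝ) (hP : P = ∑' n : ℕ, p (n + 1))
    (hμ' : ∀ n, 1 ≤ n → 0 ≤ μ' n)
    (hstep : ∀ n, 1 ≤ n → lam (n + 1) =
      if A (w n) = A (y n) then lam n + p n
      else min ((μ + μ' n) * ‖w n - y n‖ / ‖A (w n) - A (y n)‖) (lam n + p n)) :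
    (∀ n, 1 ≤ n → min (μ / L) (lam 1) ≤ lam n ∧ lam n ≤ lam 1 + P) ∧
    ∃ l ∈ Set.Icc (min (μ / L) (lam 1)) (lam 1 + P),
      Tendsto lam atTop (𝓝 l) := by
  set u : ℕ → ℝ := fun n => lam (n + 1)
  have hp₀ (n : ℕ) : 0 ≤ p (n + 1) := hp (n + 1) n.succ_pos
  have hu_le (n : ℕ) : u (n + 1) ≤ u n + p (n + 1) := by
    simp only [u, hstep (n + 1) n.succ_pos]
    split_ifs
    exacts [le_rfl, min_le_right _ _]
  have hu_ge (n : ℕ) : min (μ / L) (u n) ≤ u (n + 1) := by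
    simp only [u, hstep (n + 1) n.succ_pos]
    have hle : min (μ / L) (lam (n + 1)) ≤ lam (n + 1) + p (n + 1) :=
      (min_le_right _ _).trans (le_add_of_nonneg_right (hp₀ n))
    split_ifs with hA
    · exact hle
    · refine le_min ((min_le_left _ _).trans ?_) hle
      exact div_le_mul_norm_sub_div_norm_sub hL hALip hμ.1.le
        (le_add_of_nonneg_right (hμ' _ n.succ_pos)) (norm_pos_iff.2 (sub_ne_zero.2 hA))
  have hu_mem (n : ℕ) : u n ∈ Set.Icc (min (μ / L) (lam 1)) (lam 1 + P) :=
    ⟨min_le_of_forall_min_le_succ hu_ge n, hP ▸ le_add_tsum_of_le_add hp₀ hpsum hu_le n⟩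
  obtain ⟨l, hl⟩ := exists_tendsto_of_le_add_of_summable hpsum hu_le
    ⟨_, Set.forall_mem_range.2 fun n => (hu_mem n).1⟩
  refine ⟨fun n hn => ?_, l, isClosed_Icc.mem_of_tendsto hl (Eventually.of_forall hu_mem),
    (tendsto_add_atTop_iff_nat 1).1 hl⟩
  obtain ⟨k, rfl⟩ := Nat.exists_eq_add_of_le' hn
  exact hu_mem k

/-- Lemma 3.1: the self-adaptive step sizes of Algorithm 3.1 are bounded
between `min (μ/L) λ₁` and `λ₁ + P`, and converge to some limit in that interval. -/
theorem stmt_0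
    {H : Type*} [NormedAddCommGroup H] [InnerProductSpace ℝ H] [CompleteSpace H]
    (L : ℝ) (hL : 0 < L) (A : H → H)
    (hALip : ∀ x y : H, ‖A x - A y‖ ≤ L * ‖x - y‖)
    (μ : ℝ) (hμ : μ ∈ Set.Ioo (0 : ℝ) 1)
    (p μ' lam : ℕ → ℝ) (w y : ℕ → H)
    (hp : ∀ n, 1 ≤ n → 0 ≤ p n)
    (hpsum : Summable (fun n => p (n + 1)))
    (P : ℝ) (hP : P = ∑' n : ℕ, p (n + 1))
    (hμ' : ∀ n, 1 ≤ n → 0 ≤ μ' n)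
    (hlam1 : 0 < lam 1)
    (hstep : ∀ n, 1 ≤ n → lam (n + 1) =
      if A (w n) = A (y n) then lam n + p n
      else min ((μ + μ' n) * ‖w n - y n‖ / ‖A (w n) - A (y n)‖) (lam n + p n)) :
    (∀ n, 1 ≤ n → min (μ / L) (lam 1) ≤ lam n ∧ lam n ≤ lam 1 + P) ∧
    ∃ l ∈ Set.Icc (min (μ / L) (lam 1)) (lam 1 + P),
      Tendsto lam atTop (𝓝 l) :=
  stmt_0_general L hL A hALip μ hμ p μ' lam w y hp hpsum P hP hμ' hstep
end

section
/- Let H be a real Hilbert space, A : H → H monotone, and B : H → 2^H a monotone set-valued map. Let λ, λ' > 0, c ≥ 0, and let w, y ∈ H satisfy (1/λ)(w − y − λAw) ∈ By and λ'‖Aw − Ay‖ ≤ c‖w − y‖ (as is guaranteed, with c = μ + μₙ, by the step-size rule of Algorithm 3.1). Then for every p ∈ H with −Ap ∈ Bp, ‖y − λ(Ay − Aw) − p‖² ≤ ‖w − p‖² − (1 − c²λ²/λ'²)‖w − y‖². -/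
open scoped RealInnerProductSpace

/-!
Since `A` is monotone, `A + B` is monotone; pairing the resolvent inclusion at `y` with
`0 ∈ (A + B) p` gives `0 ≤ ⟪(w - y) + λ (A y - A w), y - p⟫`. Expanding `‖y - λ (A y - A w) - p‖²`
around `w` turns this into the estimate up to the error `λ² ‖A y - A w‖²`, which the step-size
rule bounds by `c² λ² / λ'² ‖w - y‖²`.
-/

section

variable {H : Type*} [NormedAddCommGroup H] [InnerProductSpace ℝ H]

lemma inner_add_apply_sub_nonneg_of_neg_apply_mem {A : H → H} {B : H → Set H}
    (hA : ∀ x y : H, 0 ≤ ⟪A x - A y, x - y⟫)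
    (hB : ∀ x y u v : H, u ∈ B x → v ∈ B y → 0 ≤ ⟪u - v, x - y⟫)
    {y p u : H} (hu : u ∈ B y) (hp : -A p ∈ B p) :
    0 ≤ ⟪u + A y, y - p⟫ := by
  have hsum : u + A y = (u - -A p) + (A y - A p) := by abel
  rw [hsum, inner_add_left]
  exact add_nonneg (hB y p u (-A p) hu hp) (hA y p)

lemma norm_sub_smul_sub_sq (w y p d : H) (lam : ℝ) :
    ‖y - lam • d - p‖ ^ 2 =
      ‖w - p‖ ^ 2 - ‖w - y‖ ^ 2 - 2 * ⟪(w - y) + lam • d, y - p⟫ + lam ^ 2 * ‖d‖ ^ 2 := by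
  have hz : y - lam • d - p = (y - p) - lam • d := by abel
  have hw : w - p = (w - y) + (y - p) := by abel
  rw [hz, hw, norm_sub_sq_real, norm_add_sq_real, inner_add_left, real_inner_smul_left,
    real_inner_smul_right, real_inner_comm d, norm_smul, mul_pow, Real.norm_eq_abs, sq_abs]
  ring

end

lemma sq_mul_sq_le_of_mul_le {lam lam' c a b : ℝ} (hlam' : 0 < lam') (ha : 0 ≤ a)
    (h : lam' * a ≤ c * b) :
    lam ^ 2 * a ^ 2 ≤ c ^ 2 * lam ^ 2 / lam' ^ 2 * b ^ 2 := by
  have hsq : lam' ^ 2 * a ^ 2 ≤ c ^ 2 * b ^ 2 := by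
    simpa only [mul_pow] using pow_le_pow_left₀ (by positivity) h 2
  rw [div_mul_eq_mul_div, le_div_iff₀ (by positivity)]
  nlinarith [sq_nonneg lam]

theorem stmt_1_general
    {H : Type*} [NormedAddCommGroup H] [InnerProductSpace ℝ H]
    (A : H → H) (B : H → Set H)
    (hAmono : ∀ x y : H, 0 ≤ ⟪A x - A y, x - y⟫)
    (hBmono : ∀ x y u v : H, u ∈ B x → v ∈ B y → 0 ≤ ⟪u - v, x - y⟫)
    (lam lam' c : ℝ) (hlam : 0 < lam) (hlam' : 0 < lam')
    (w y : H)
    (hres : (1 / lam) • (w - y - lam • A w) ∈ B y)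
    (hstepsize : lam' * ‖A w - A y‖ ≤ c * ‖w - y‖) :
    ∀ p : H, -A p ∈ B p →
      ‖y - lam • (A y - A w) - p‖ ^ 2 ≤
        ‖w - p‖ ^ 2 - (1 - c ^ 2 * lam ^ 2 / lam' ^ 2) * ‖w - y‖ ^ 2 := by
  intro p hp
  have hscale : (w - y) + lam • (A y - A w) = lam • ((1 / lam) • (w - y - lam • A w) + A y) := by
    rw [smul_add, smul_smul, mul_one_div_cancel hlam.ne', one_smul, smul_sub]
    abel
  have hcross : 0 ≤ ⟪(w - y) + lam • (A y - A w), y - p⟫ := by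
    rw [hscale, real_inner_smul_left]
    exact mul_nonneg hlam.le (inner_add_apply_sub_nonneg_of_neg_apply_mem hAmono hBmono hres hp)
  have herror : lam ^ 2 * ‖A y - A w‖ ^ 2 ≤ c ^ 2 * lam ^ 2 / lam' ^ 2 * ‖w - y‖ ^ 2 :=
    sq_mul_sq_le_of_mul_le hlam' (norm_nonneg _) (norm_sub_rev (A w) (A y) ▸ hstepsize)
  rw [norm_sub_smul_sub_sq w]
  linarith

/-- Lemma 3.2(i): the fundamental one-step estimate for the Tseng point. -/
theorem stmt_1
    {H : Type*} [NormedAddCommGroup H] [InnerProductSpace ℝ H] [CompleteSpace H]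
    (A : H → H) (B : H → Set H)
    (hAmono : ∀ x y : H, 0 ≤ ⟪A x - A y, x - y⟫)
    (hBmono : ∀ x y u v : H, u ∈ B x → v ∈ B y → 0 ≤ ⟪u - v, x - y⟫)
    (lam lam' c : ℝ) (hlam : 0 < lam) (hlam' : 0 < lam') (hc : 0 ≤ c)
    (w y : H)
    (hres : (1 / lam) • (w - y - lam • A w) ∈ B y)
    (hstepsize : lam' * ‖A w - A y‖ ≤ c * ‖w - y‖) :
    ∀ p : H, -A p ∈ B p →
      ‖y - lam • (A y - A w) - p‖ ^ 2 ≤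
        ‖w - p‖ ^ 2 - (1 - c ^ 2 * lam ^ 2 / lam' ^ 2) * ‖w - y‖ ^ 2 :=
  stmt_1_general A B hAmono hBmono lam lam' c hlam hlam' w y hres hstepsize
end

section
/- Let H be a real Hilbert space, A : H → H monotone, and B : H → 2^H an r-strongly monotone set-valued map with r > 0. Let λ, λ' > 0, c ≥ 0, and let w, y ∈ H satisfy (1/λ)(w − y − λAw) ∈ By and λ'‖Aw − Ay‖ ≤ c‖w − y‖. Then for every p ∈ H with −Ap ∈ Bp, ‖y − λ(Ay − Aw) − p‖² ≤ ‖w − p‖² − (1 − c²λ²/λ'²)‖w − y‖² − 2rλ‖y − p‖². -/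
open scoped RealInnerProductSpace

/-!
Strong monotonicity of `B`, tested at the resolvent inclusion for `y` and at `-A p ∈ B p`, together
with monotonicity of `A` between `y` and `p`, bounds `⟪w - y, y - p⟫ + λ⟪A y - A w, y - p⟫` from
below by `λ r ‖y - p‖²`. Expanding both squared norms shows that the claimed inequality is exactly
this bound plus the step-size estimate `λ²‖A w - A y‖² ≤ (cλ/λ')²‖w - y‖²`.
-/

section

variable {H : Type*} [NormedAddCommGroup H] [InnerProductSpace ℝ H]

theorem norm_sub_smul_sub_sq_eq (w y p e : H) (t : ℝ) :
    ‖y - t • e - p‖ ^ 2 =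
      ‖w - p‖ ^ 2 - ‖w - y‖ ^ 2 - 2 * (⟪w - y, y - p⟫ + t * ⟪e, y - p⟫) + t ^ 2 * ‖e‖ ^ 2 := by
  have hw : ‖w - p‖ ^ 2 = ‖w - y‖ ^ 2 + 2 * ⟪w - y, y - p⟫ + ‖y - p‖ ^ 2 := by
    rw [← norm_add_sq_real, sub_add_sub_cancel]
  have hy : ‖y - t • e - p‖ ^ 2 = ‖y - p‖ ^ 2 - 2 * (t * ⟪e, y - p⟫) + t ^ 2 * ‖e‖ ^ 2 := by
    rw [sub_right_comm, norm_sub_sq_real, real_inner_smul_right, real_inner_comm, norm_smul,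
      mul_pow, Real.norm_eq_abs, sq_abs]
  rw [hy, hw]
  ring

theorem mul_inner_le_of_mem_resolvent (A : H → H) (B : H → Set H) (r lam : ℝ)
    (hAmono : ∀ x y : H, 0 ≤ ⟪A x - A y, x - y⟫)
    (hBstrong : ∀ x y u v : H, u ∈ B x → v ∈ B y → r * ‖x - y‖ ^ 2 ≤ ⟪u - v, x - y⟫)
    (hlam : 0 < lam) {w y p : H} (hres : (1 / lam) • (w - y - lam • A w) ∈ B y)
    (hp : -A p ∈ B p) :
    lam * r * ‖y - p‖ ^ 2 ≤ ⟪w - y, y - p⟫ + lam * ⟪A y - A w, y - p⟫ := by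
  have hB := mul_le_mul_of_nonneg_left (hBstrong y p _ _ hres hp) hlam.le
  have hscale : lam • ((1 / lam) • (w - y - lam • A w) - -A p) =
      (w - y) - lam • (A y - A p) + lam • (A y - A w) := by
    rw [smul_sub, smul_smul, mul_one_div_cancel hlam.ne', one_smul, smul_sub, smul_sub, smul_neg]
    abel
  rw [← real_inner_smul_left, hscale, inner_add_left, inner_sub_left, real_inner_smul_left,
    real_inner_smul_left] at hB
  linarith [mul_nonneg hlam.le (hAmono y p)]

theorem sq_mul_le_of_mul_norm_le {a b lam lam' c : ℝ} (hlam' : 0 < lam') (ha : 0 ≤ a)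
    (h : lam' * a ≤ c * b) :
    lam ^ 2 * a ^ 2 ≤ c ^ 2 * lam ^ 2 / lam' ^ 2 * b ^ 2 := by
  have hsq : (lam' * a) ^ 2 ≤ (c * b) ^ 2 := pow_le_pow_left₀ (by positivity) h 2
  rw [div_mul_eq_mul_div, le_div_iff₀ (by positivity)]
  nlinarith [sq_nonneg lam]

end

theorem stmt_2_general
    {H : Type*} [NormedAddCommGroup H] [InnerProductSpace ℝ H]
    (A : H → H) (B : H → Set H) (r : ℝ)
    (hAmono : ∀ x y : H, 0 ≤ ⟪A x - A y, x - y⟫)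
    (hBstrong : ∀ x y u v : H, u ∈ B x → v ∈ B y → r * ‖x - y‖ ^ 2 ≤ ⟪u - v, x - y⟫)
    (lam lam' c : ℝ) (hlam : 0 < lam) (hlam' : 0 < lam')
    (w y : H)
    (hres : (1 / lam) • (w - y - lam • A w) ∈ B y)
    (hstepsize : lam' * ‖A w - A y‖ ≤ c * ‖w - y‖) :
    ∀ p : H, -A p ∈ B p →
      ‖y - lam • (A y - A w) - p‖ ^ 2 ≤
        ‖w - p‖ ^ 2 - (1 - c ^ 2 * lam ^ 2 / lam' ^ 2) * ‖w - y‖ ^ 2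
          - 2 * r * lam * ‖y - p‖ ^ 2 := by
  intro p hp
  have hinner := mul_inner_le_of_mem_resolvent A B r lam hAmono hBstrong hlam hres hp
  have hstep : lam ^ 2 * ‖A y - A w‖ ^ 2 ≤ c ^ 2 * lam ^ 2 / lam' ^ 2 * ‖w - y‖ ^ 2 := by
    rw [norm_sub_rev]
    exact sq_mul_le_of_mul_norm_le hlam' (norm_nonneg _) hstepsize
  rw [norm_sub_smul_sub_sq_eq w y p]
  linarith

/-- Lemma 3.2(ii), Case I: the one-step estimate when `B` is `r`-strongly monotone. -/
theorem stmt_2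
    {H : Type*} [NormedAddCommGroup H] [InnerProductSpace ℝ H] [CompleteSpace H]
    (A : H → H) (B : H → Set H) (r : ℝ) (hr : 0 < r)
    (hAmono : ∀ x y : H, 0 ≤ ⟪A x - A y, x - y⟫)
    (hBstrong : ∀ x y u v : H, u ∈ B x → v ∈ B y → r * ‖x - y‖ ^ 2 ≤ ⟪u - v, x - y⟫)
    (lam lam' c : ℝ) (hlam : 0 < lam) (hlam' : 0 < lam') (hc : 0 ≤ c)
    (w y : H)
    (hres : (1 / lam) • (w - y - lam • A w) ∈ B y)
    (hstepsize : lam' * ‖A w - A y‖ ≤ c * ‖w - y‖) :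
    ∀ p : H, -A p ∈ B p →
      ‖y - lam • (A y - A w) - p‖ ^ 2 ≤
        ‖w - p‖ ^ 2 - (1 - c ^ 2 * lam ^ 2 / lam' ^ 2) * ‖w - y‖ ^ 2
          - 2 * r * lam * ‖y - p‖ ^ 2 :=
  stmt_2_general A B r hAmono hBstrong lam lam' c hlam hlam' w y hres hstepsize
end

section
/- Let H be a real Hilbert space, A : H → H monotone and L-Lipschitz continuous, and B : H → 2^H a monotone set-valued map. Let λ > 0 and w, y ∈ H with (1/λ)(w − y − λAw) ∈ By. Then for all u, v ∈ H with v − Au ∈ Bu, one has ⟨u − y, v⟩ ≥ (1/λ)⟨u − y, w − y⟩ − L‖u − y‖·‖y − w‖. -/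
open scoped RealInnerProductSpace

theorem neg_mul_norm_mul_le_inner_sub_of_lipschitz {H : Type*} [NormedAddCommGroup H]
    [InnerProductSpace ℝ H] {L : ℝ} {A : H → H} (hA : ∀ x y : H, ‖A x - A y‖ ≤ L * ‖x - y‖)
    (z x y : H) : -(L * (‖z‖ * ‖x - y‖)) ≤ ⟪z, A x - A y⟫ := by
  calc -(L * (‖z‖ * ‖x - y‖)) = -(‖z‖ * (L * ‖x - y‖)) := by ring
    _ ≤ -(‖z‖ * ‖A x - A y‖) := by gcongr; exact hA x y
    _ ≤ ⟪z, A x - A y⟫ := neg_le_of_abs_le (abs_real_inner_le_norm _ _)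

theorem one_div_smul_sub_smul {H : Type*} [AddCommGroup H] [Module ℝ H] {lam : ℝ}
    (hlam : lam ≠ 0) (x a : H) : (1 / lam) • (x - lam • a) = (1 / lam) • x - a := by
  rw [smul_sub, smul_smul, one_div_mul_cancel hlam, one_smul]

theorem stmt_4_general
    {H : Type*} [NormedAddCommGroup H] [InnerProductSpace ℝ H]
    (L : ℝ) (A : H → H) (B : H → Set H)
    (hAmono : ∀ x y : H, 0 ≤ ⟪A x - A y, x - y⟫)
    (hALip : ∀ x y : H, ‖A x - A y‖ ≤ L * ‖x - y‖)
    (hBmono : ∀ x y u v : H, u ∈ B x → v ∈ B y → 0 ≤ ⟪u - v, x - y⟫)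
    (lam : ℝ) (hlam : 0 < lam) (w y : H)
    (hres : (1 / lam) • (w - y - lam • A w) ∈ B y) :
    ∀ u v : H, v - A u ∈ B u →
      (1 / lam) * ⟪u - y, w - y⟫ - L * (‖u - y‖ * ‖y - w‖) ≤ ⟪u - y, v⟫ := by
  intro u v hu
  have hB := hBmono _ _ _ _ hu hres
  rw [one_div_smul_sub_smul hlam.ne', real_inner_comm] at hB
  have hA := hAmono u y
  rw [real_inner_comm] at hA
  calc (1 / lam) * ⟪u - y, w - y⟫ - L * (‖u - y‖ * ‖y - w‖)
      ≤ ⟪u - y, (v - A u) - ((1 / lam) • (w - y) - A w)⟫ + (1 / lam) * ⟪u - y, w - y⟫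
          + ⟪u - y, A u - A y⟫ + ⟪u - y, A y - A w⟫ := by
        linarith [hA, neg_mul_norm_mul_le_inner_sub_of_lipschitz hALip (u - y) y w]
    _ = ⟪u - y, v⟫ := by
        simp only [inner_sub_right, real_inner_smul_right]
        ring

/-- The key estimate (3.7) in the proof of Lemma 3.3. -/
theorem stmt_4
    {H : Type*} [NormedAddCommGroup H] [InnerProductSpace ℝ H] [CompleteSpace H]
    (L : ℝ) (A : H → H) (B : H → Set H)
    (hAmono : ∀ x y : H, 0 ≤ ⟪A x - A y, x - y⟫)
    (hALip : ∀ x y : H, ‖A x - A y‖ ≤ L * ‖x - y‖)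
    (hBmono : ∀ x y u v : H, u ∈ B x → v ∈ B y → 0 ≤ ⟪u - v, x - y⟫)
    (lam : ℝ) (hlam : 0 < lam) (w y : H)
    (hres : (1 / lam) • (w - y - lam • A w) ∈ B y) :
    ∀ u v : H, v - A u ∈ B u →
      (1 / lam) * ⟪u - y, w - y⟫ - L * (‖u - y‖ * ‖y - w‖) ≤ ⟪u - y, v⟫ :=
  stmt_4_general L A B hAmono hALip hBmono lam hlam w y hres
end

section
/- Let H be a real Hilbert space, p, x⁻, x, t ∈ H, θ ∈ (0, 1], α ≥ 0, and 0 ≤ β ≤ 1. Set w := x + α(x − x⁻), z := x + β(x − x⁻), and x⁺ := (1 − θ)z + θt. If ‖t − p‖² ≤ ‖w − p‖², then ‖x⁺ − p‖² ≤ (1 + a)‖x − p‖² − a‖x⁻ − p‖² + b‖x − x⁻‖² − c‖x⁺ − x‖², where a := (1 − θ)β + θα, b := (1 − θ)(1 + β)β + θ(1 + α)α + ((1 − θ)/θ)(β − β²), and c := ((1 − θ)/θ)(1 − β). -/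
/-!
Write the relaxed point as a combination of the extrapolated point `z` and the Tseng point `t`,
and expand both extrapolation points `x + γ (x - x⁻)` through the identity
`‖(1 - θ) u + θ v‖² = (1 - θ) ‖u‖² + θ ‖v‖² - θ (1 - θ) ‖u - v‖²`, valid for every real `θ`
(with `θ = -γ` for the extrapolations). The only inequalities used are the contraction
`‖t - p‖ ≤ ‖w - p‖` and the lower bound `‖x⁺ - z‖² ≥ (1 - β) ‖x⁺ - x‖² - β (1 - β) ‖x - x⁻‖²`,
which is the same identity applied to `x⁺ - z = (1 - β) (x⁺ - x) + β (x⁺ - x - (x - x⁻))`.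
-/

open scoped RealInnerProductSpace

section

variable {H : Type*} [NormedAddCommGroup H] [InnerProductSpace ℝ H]

theorem norm_one_sub_smul_add_smul_sq (u v : H) (θ : ℝ) :
    ‖(1 - θ) • u + θ • v‖ ^ 2
      = (1 - θ) * ‖u‖ ^ 2 + θ * ‖v‖ ^ 2 - θ * (1 - θ) * ‖u - v‖ ^ 2 := by
  rw [norm_add_sq_real, norm_sub_sq_real, norm_smul, norm_smul, real_inner_smul_left,
    real_inner_smul_right, mul_pow, mul_pow, Real.norm_eq_abs, Real.norm_eq_abs, sq_abs, sq_abs]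
  ring

theorem norm_add_smul_sub_sub_sq (x y p : H) (γ : ℝ) :
    ‖x + γ • (x - y) - p‖ ^ 2
      = (1 + γ) * ‖x - p‖ ^ 2 - γ * ‖y - p‖ ^ 2 + (1 + γ) * γ * ‖x - y‖ ^ 2 := by
  have hcomb : x + γ • (x - y) - p = (1 - -γ) • (x - p) + (-γ) • (y - p) := by module
  rw [hcomb, norm_one_sub_smul_add_smul_sq, sub_sub_sub_cancel_right]
  ring

theorem sq_norm_le_norm_sub_smul_sq (a b : H) {β : ℝ} (hβ : 0 ≤ β) :
    (1 - β) * ‖a‖ ^ 2 - β * (1 - β) * ‖b‖ ^ 2 ≤ ‖a - β • b‖ ^ 2 := by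
  have hcomb : a - β • b = (1 - β) • a + β • (a - b) := by module
  rw [hcomb, norm_one_sub_smul_add_smul_sq, sub_sub_cancel]
  nlinarith [mul_nonneg hβ (sq_nonneg ‖a - b‖)]

theorem norm_one_sub_smul_add_smul_sub_sq (z t p : H) (θ : ℝ) :
    ‖(1 - θ) • z + θ • t - p‖ ^ 2
      = (1 - θ) * ‖z - p‖ ^ 2 + θ * ‖t - p‖ ^ 2
        - ((1 - θ) / θ) * ‖(1 - θ) • z + θ • t - z‖ ^ 2 := by
  have hcomb : (1 - θ) • z + θ • t - p = (1 - θ) • (z - p) + θ • (t - p) := by module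
  have hstep : (1 - θ) • z + θ • t - z = θ • (t - z) := by module
  rw [hcomb, norm_one_sub_smul_add_smul_sq, hstep, norm_smul, mul_pow, Real.norm_eq_abs, sq_abs,
    sub_sub_sub_cancel_right, norm_sub_rev z t]
  have hcoeff : (1 - θ) / θ * θ ^ 2 = θ * (1 - θ) := by
    rcases eq_or_ne θ 0 with rfl | hθ
    · simp
    · field_simp
  linear_combination ‖t - z‖ ^ 2 * hcoeff

end

theorem stmt_6_general
    {H : Type*} [NormedAddCommGroup H] [InnerProductSpace ℝ H]
    (p xm x t : H) (θ α β : ℝ)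
    (hθ : θ ∈ Set.Ioc (0 : ℝ) 1) (hβ0 : 0 ≤ β)
    (w z xp : H)
    (hw : w = x + α • (x - xm)) (hz : z = x + β • (x - xm))
    (hxp : xp = (1 - θ) • z + θ • t)
    (ht : ‖t - p‖ ^ 2 ≤ ‖w - p‖ ^ 2) :
    ‖xp - p‖ ^ 2 ≤ (1 + ((1 - θ) * β + θ * α)) * ‖x - p‖ ^ 2
      - ((1 - θ) * β + θ * α) * ‖xm - p‖ ^ 2
      + ((1 - θ) * (1 + β) * β + θ * (1 + α) * α + ((1 - θ) / θ) * (β - β ^ 2)) * ‖x - xm‖ ^ 2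
      - (((1 - θ) / θ) * (1 - β)) * ‖xp - x‖ ^ 2 := by
  obtain ⟨hθ0, hθ1⟩ := hθ
  have hrelax := norm_one_sub_smul_add_smul_sub_sq z t p θ
  rw [← hxp] at hrelax
  have hW : ‖w - p‖ ^ 2 = _ := hw ▸ norm_add_smul_sub_sub_sq x xm p α
  have hZ : ‖z - p‖ ^ 2 = _ := hz ▸ norm_add_smul_sub_sub_sq x xm p β
  have hstep : ‖xp - z‖ ^ 2 ≥ (1 - β) * ‖xp - x‖ ^ 2 - β * (1 - β) * ‖x - xm‖ ^ 2 := by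
    have hdiff : xp - z = (xp - x) - β • (x - xm) := by rw [hz]; abel
    exact hdiff ▸ sq_norm_le_norm_sub_smul_sq _ _ hβ0
  have hρ : 0 ≤ (1 - θ) / θ := div_nonneg (by linarith) hθ0.le
  rw [hrelax, hZ]
  linarith [mul_le_mul_of_nonneg_left (hW ▸ ht) hθ0.le, mul_le_mul_of_nonneg_left hstep hρ]

/-- The one-step estimate (3.16) in the proof of Theorem 3.1. -/
theorem stmt_6
    {H : Type*} [NormedAddCommGroup H] [InnerProductSpace ℝ H] [CompleteSpace H]
    (p xm x t : H) (θ α β : ℝ)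
    (hθ : θ ∈ Set.Ioc (0 : ℝ) 1) (hα : 0 ≤ α) (hβ0 : 0 ≤ β) (hβ1 : β ≤ 1)
    (w z xp : H)
    (hw : w = x + α • (x - xm)) (hz : z = x + β • (x - xm))
    (hxp : xp = (1 - θ) • z + θ • t)
    (ht : ‖t - p‖ ^ 2 ≤ ‖w - p‖ ^ 2) :
    ‖xp - p‖ ^ 2 ≤ (1 + ((1 - θ) * β + θ * α)) * ‖x - p‖ ^ 2
      - ((1 - θ) * β + θ * α) * ‖xm - p‖ ^ 2
      + ((1 - θ) * (1 + β) * β + θ * (1 + α) * α + ((1 - θ) / θ) * (β - β ^ 2)) * ‖x - xm‖ ^ 2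
      - (((1 - θ) / θ) * (1 - β)) * ‖xp - x‖ ^ 2 :=
  stmt_6_general p xm x t θ α β hθ hβ0 w z xp hw hz hxp ht
end

section
/- Let ε ∈ (1, ∞) and let β, βₙ, βₙ₊₁, αₙ₊₁, θₙ, θₙ₊₁ be real numbers with 0 ≤ βₙ ≤ βₙ₊₁ ≤ β < (3 + 2ε − √(8ε + 17))/(2ε), 0 ≤ αₙ₊₁ ≤ 1, and 0 < θₙ ≤ θₙ₊₁ ≤ 1/(1 + ε). Define bₙ₊₁ := (1 − θₙ₊₁)(1 + βₙ₊₁)βₙ₊₁ + θₙ₊₁(1 + αₙ₊₁)αₙ₊₁ + ((1 − θₙ₊₁)/θₙ₊₁)(βₙ₊₁ − βₙ₊₁²) and cₙ := ((1 − θₙ)/θₙ)(1 − βₙ). Then cₙ − bₙ₊₁ ≥ δ, where δ := (ε²β² − (3ε + 2ε²)β + (ε² + ε − 2))/(1 + ε), and δ > 0. -/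
/-!
With `q ε t := ε²t² − (3ε + 2ε²)t + (ε² + ε − 2)` (`gapQuadratic`) we have `δ = q ε β / (1 + ε)`.
The discriminant of `q ε` is `ε²(8ε + 17)`, so the bound on `β` says exactly that `β` lies below the
smaller root of `q ε`, whence `δ > 0`; that root is below `1`, where `q ε` is decreasing, so
`q ε β ≤ q ε βₙ₊₁`.

The coefficient `cₙ` only decreases when `(θₙ, βₙ)` is replaced by `(θₙ₊₁, βₙ₊₁)`, and for one pair
`(θ, b)` with `θ(1 + ε) ≤ 1` the identity
`θ((1 + ε)(c − b₊) − q ε b) = (1 − θ(1 + ε))((1 + ε)(1 − b)² + θ(2 − (1 + b)b)) + θ²(1 + ε)(2 − (1 + α)α)`,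
where `c = cₙ` and `b₊ = bₙ₊₁` are computed from `θ, b, α`, shows `c − b₊ ≥ q ε b / (1 + ε)`.
-/

open Real

/-- The coefficient `cₙ` of the paper. -/
noncomputable def coeffC (θ b : ℝ) : ℝ := (1 - θ) / θ * (1 - b)

/-- The coefficient `bₙ₊₁` of the paper. -/
noncomputable def coeffB (θ b α : ℝ) : ℝ :=
  (1 - θ) * (1 + b) * b + θ * (1 + α) * α + (1 - θ) / θ * (b - b ^ 2)

def gapQuadratic (ε t : ℝ) : ℝ := ε ^ 2 * t ^ 2 - (3 * ε + 2 * ε ^ 2) * t + (ε ^ 2 + ε - 2)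

theorem quadratic_pos_of_lt_smaller_root {a b c x : ℝ} (ha : 0 < a)
    (hx : x < (-b - √(discrim a b c)) / (2 * a)) : 0 < a * (x * x) + b * x + c := by
  have hlt : √(discrim a b c) < -(2 * a * x + b) := by
    rw [lt_div_iff₀ (by positivity)] at hx
    linarith
  have hsq : discrim a b c < (2 * a * x + b) ^ 2 :=
    calc discrim a b c ≤ √(discrim a b c) ^ 2 := by rw [sq_sqrt']; exact le_max_left _ _
      _ < (-(2 * a * x + b)) ^ 2 := by gcongr
      _ = (2 * a * x + b) ^ 2 := neg_sq _
  have h4a : 0 < 4 * a * (a * (x * x) + b * x + c) := by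
    rw [discrim] at hsq
    linarith
  exact pos_of_mul_pos_right h4a (by positivity)

theorem gapQuadratic_pos {ε β : ℝ} (hε : 0 < ε)
    (hβ : β < (3 + 2 * ε - √(8 * ε + 17)) / (2 * ε)) : 0 < gapQuadratic ε β := by
  have hdisc : discrim (ε ^ 2) (-(3 * ε + 2 * ε ^ 2)) (ε ^ 2 + ε - 2) = ε ^ 2 * (8 * ε + 17) := by
    rw [discrim]; ring
  have hroot : (-(-(3 * ε + 2 * ε ^ 2)) - √(ε ^ 2 * (8 * ε + 17))) / (2 * ε ^ 2)
      = (3 + 2 * ε - √(8 * ε + 17)) / (2 * ε) := by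
    rw [sqrt_mul' _ (by linarith), sqrt_sq hε.le]
    field_simp
  have h := quadratic_pos_of_lt_smaller_root (b := -(3 * ε + 2 * ε ^ 2)) (c := ε ^ 2 + ε - 2)
    (x := β) (pow_pos hε 2) (by rwa [hdisc, hroot])
  rw [gapQuadratic]
  linarith

theorem smaller_root_lt_one {ε : ℝ} (hε : 0 < ε) : (3 + 2 * ε - √(8 * ε + 17)) / (2 * ε) < 1 := by
  have h3 : 3 < √(8 * ε + 17) := by
    rw [lt_sqrt (by norm_num)]
    linarith
  rw [div_lt_one (by positivity)]
  linarith

theorem gapQuadratic_antitoneOn {ε : ℝ} (hε : 0 < ε) : AntitoneOn (gapQuadratic ε) (Set.Iic 1) := by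
  intro x hx y hy hxy
  simp only [Set.mem_Iic] at hx hy
  have hfactor : gapQuadratic ε x - gapQuadratic ε y
      = (y - x) * (3 * ε + 2 * ε ^ 2 - ε ^ 2 * (x + y)) := by
    rw [gapQuadratic, gapQuadratic]; ring
  have hslope : 0 ≤ 3 * ε + 2 * ε ^ 2 - ε ^ 2 * (x + y) := by nlinarith
  nlinarith [mul_nonneg (sub_nonneg.mpr hxy) hslope]

theorem one_sub_div_antitone {θ θ' : ℝ} (hθ : 0 < θ) (hθθ' : θ ≤ θ') :
    (1 - θ') / θ' ≤ (1 - θ) / θ := by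
  rw [sub_div, sub_div, div_self hθ.ne', div_self (hθ.trans_le hθθ').ne']
  gcongr

theorem coeffC_le_coeffC {θ θ' b b' : ℝ} (hθ : 0 < θ) (hθθ' : θ ≤ θ') (hθ' : θ' ≤ 1)
    (hbb' : b ≤ b') (hb' : b' ≤ 1) : coeffC θ' b' ≤ coeffC θ b := by
  have hθ'0 : 0 ≤ (1 - θ') / θ' := div_nonneg (by linarith) (by linarith)
  exact mul_le_mul (one_sub_div_antitone hθ hθθ') (by linarith) (by linarith)
    (hθ'0.trans (one_sub_div_antitone hθ hθθ'))

theorem one_add_mul_self_le_two {x : ℝ} (h0 : 0 ≤ x) (h1 : x ≤ 1) : (1 + x) * x ≤ 2 := by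
  nlinarith [mul_nonneg (sub_nonneg.mpr h1) (by linarith : (0 : ℝ) ≤ 2 + x)]

theorem gapQuadratic_div_le_coeffC_sub_coeffB {ε θ b α : ℝ} (hε : 0 < 1 + ε) (hθ0 : 0 < θ)
    (hθ : θ ≤ 1 / (1 + ε)) (hb0 : 0 ≤ b) (hb1 : b ≤ 1) (hα0 : 0 ≤ α) (hα1 : α ≤ 1) :
    gapQuadratic ε b / (1 + ε) ≤ coeffC θ b - coeffB θ b α := by
  have hT : 0 ≤ 1 - θ * (1 + ε) := by
    rw [le_div_iff₀ hε] at hθ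
    linarith
  have hid : θ * ((1 + ε) * (coeffC θ b - coeffB θ b α) - gapQuadratic ε b)
      = (1 - θ * (1 + ε)) * ((1 + ε) * (1 - b) ^ 2 + θ * (2 - (1 + b) * b))
        + θ ^ 2 * (1 + ε) * (2 - (1 + α) * α) := by
    rw [coeffC, coeffB, gapQuadratic]
    field_simp
    ring
  have hrhs : 0 ≤ θ * ((1 + ε) * (coeffC θ b - coeffB θ b α) - gapQuadratic ε b) := by
    have := one_add_mul_self_le_two hb0 hb1
    have := one_add_mul_self_le_two hα0 hα1
    rw [hid]
    positivity
  rw [div_le_iff₀ hε]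
  linarith [nonneg_of_mul_nonneg_right hrhs hθ0]

/-- The algebraic estimate (3.17)–(3.19) in the proof of Theorem 3.1:
under the parameter conditions (C3) the gap `cₙ − bₙ₊₁` is at least `δ > 0`. -/
theorem stmt_7
    (ε β βn βn1 αn1 θn θn1 : ℝ)
    (hε : 1 < ε)
    (hβn0 : 0 ≤ βn) (hβmono : βn ≤ βn1) (hβn1 : βn1 ≤ β)
    (hβ : β < (3 + 2 * ε - Real.sqrt (8 * ε + 17)) / (2 * ε))
    (hαn10 : 0 ≤ αn1) (hαn11 : αn1 ≤ 1)
    (hθn : 0 < θn) (hθmono : θn ≤ θn1) (hθn1 : θn1 ≤ 1 / (1 + ε)) :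
    (ε ^ 2 * β ^ 2 - (3 * ε + 2 * ε ^ 2) * β + (ε ^ 2 + ε - 2)) / (1 + ε) ≤
      ((1 - θn) / θn) * (1 - βn) -
        ((1 - θn1) * (1 + βn1) * βn1 + θn1 * (1 + αn1) * αn1
          + ((1 - θn1) / θn1) * (βn1 - βn1 ^ 2)) ∧
    0 < (ε ^ 2 * β ^ 2 - (3 * ε + 2 * ε ^ 2) * β + (ε ^ 2 + ε - 2)) / (1 + ε) := by
  have hε0 : 0 < ε := by linarith
  have hβ1 : β ≤ 1 := (hβ.trans (smaller_root_lt_one hε0)).le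
  have hθn1_le_one : θn1 ≤ 1 := hθn1.trans (div_le_one_of_le₀ (by linarith) (by linarith))
  change gapQuadratic ε β / (1 + ε) ≤ coeffC θn βn - coeffB θn1 βn1 αn1 ∧
    0 < gapQuadratic ε β / (1 + ε)
  refine ⟨?_, div_pos (gapQuadratic_pos hε0 hβ) (by linarith)⟩
  calc gapQuadratic ε β / (1 + ε) ≤ gapQuadratic ε βn1 / (1 + ε) := by
        gcongr
        exact gapQuadratic_antitoneOn hε0 (hβn1.trans hβ1) hβ1 hβn1
    _ ≤ coeffC θn1 βn1 - coeffB θn1 βn1 αn1 :=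
        gapQuadratic_div_le_coeffC_sub_coeffB (by linarith) (hθn.trans_le hθmono) hθn1
          (hβn0.trans hβmono) (hβn1.trans hβ1) hαn10 hαn11
    _ ≤ coeffC θn βn - coeffB θn1 βn1 αn1 := by
        gcongr
        exact coeffC_le_coeffC hθn hθmono hθn1_le_one hβmono (hβn1.trans hβ1)
end

section
/- Let (φₙ)ₙ≥₀, (ψₙ)ₙ≥₁, (sₙ)ₙ≥₁ be nonnegative real sequences, let (aₙ)ₙ≥₁ be reals with 0 ≤ aₙ ≤ a < 1 for all n, and let δ > 0. Define Γₙ := φₙ − aₙφₙ₋₁ + ψₙ for n ≥ 1, and suppose Γₙ₊₁ − Γₙ ≤ −δ·sₙ for all n ≥ 1. Then: (i) φₙ ≤ aⁿφ₀ + max{Γ₁, 0}/(1 − a) for all n ≥ 1; (ii) δ·∑_{k=1}^{n} sₖ ≤ φ₀ + max{Γ₁, 0}/(1 − a) for all n ≥ 1; in particular ∑_{k=1}^{∞} sₖ < ∞. -/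
/-!
The energy `Γ` is nonincreasing, so `Γₙ ≤ max Γ₁ 0 =: M`. Since `ψₙ ≥ 0`, this gives the linear
recursion `φₙ ≤ a φₙ₋₁ + M`, whose solution is bounded by `aⁿ φ₀ + M / (1 - a)`. Telescoping the
energy decrease bounds `δ ∑ sₖ` by `Γ₁ - Γₙ₊₁ ≤ M + a φₙ`, which the first bound controls.
-/

open Finset

lemma mul_add_div_one_sub_add {a : ℝ} (ha : a ≠ 1) (y M : ℝ) :
    a * (y + M / (1 - a)) + M = a * y + M / (1 - a) := by
  field_simp [sub_ne_zero.2 ha.symm]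
  ring

lemma le_pow_mul_add_div_of_le_mul_add {x : ℕ → ℝ} {a M : ℝ} (ha0 : 0 ≤ a) (ha1 : a < 1)
    (hM : 0 ≤ M) (hx : ∀ n, x (n + 1) ≤ a * x n + M) (n : ℕ) :
    x n ≤ a ^ n * x 0 + M / (1 - a) := by
  induction n with
  | zero => simpa using div_nonneg hM (sub_pos.2 ha1).le
  | succ n ih =>
    calc x (n + 1) ≤ a * x n + M := hx n
      _ ≤ a * (a ^ n * x 0 + M / (1 - a)) + M := by gcongr
      _ = a ^ (n + 1) * x 0 + M / (1 - a) := by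
        rw [mul_add_div_one_sub_add ha1.ne, pow_succ', mul_assoc]

lemma mul_sum_range_le_sub_of_sub_le {G t : ℕ → ℝ} {δ : ℝ}
    (h : ∀ n, G (n + 1) - G n ≤ -(δ * t n)) (n : ℕ) :
    δ * ∑ k ∈ range n, t k ≤ G 0 - G n := by
  rw [mul_sum, ← sum_range_sub']
  exact sum_le_sum fun k _ => by linarith [h k]

lemma sub_mul_le_sub_mul_add_and_neg_mul_le {x y a b ψ : ℝ} (hx : 0 ≤ x) (hy : 0 ≤ y)
    (hψ : 0 ≤ ψ) (hb : b ≤ a) :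
    x - a * y ≤ x - b * y + ψ ∧ -(a * y) ≤ x - b * y + ψ := by
  have : b * y ≤ a * y := mul_le_mul_of_nonneg_right hb hy
  constructor <;> linarith

lemma sum_Icc_one_eq_sum_range_succ (s : ℕ → ℝ) (n : ℕ) :
    ∑ k ∈ Icc 1 n, s k = ∑ k ∈ range n, s (k + 1) := by
  rw [range_eq_Ico, sum_Ico_add', ← Ico_add_one_right_eq_Icc, zero_add]

/-- The abstract energy argument (3.19)–(3.24) in the proof of Theorem 3.1. -/
theorem stmt_8
    (φ ψ s aseq : ℕ → ℝ) (a δ : ℝ)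
    (hφ : ∀ n, 0 ≤ φ n)
    (hψ : ∀ n, 1 ≤ n → 0 ≤ ψ n)
    (hs : ∀ n, 1 ≤ n → 0 ≤ s n)
    (ha : ∀ n, 1 ≤ n → 0 ≤ aseq n ∧ aseq n ≤ a)
    (ha1 : a < 1)
    (hδ : 0 < δ)
    (Γ : ℕ → ℝ)
    (hΓ : ∀ n, 1 ≤ n → Γ n = φ n - aseq n * φ (n - 1) + ψ n)
    (hdec : ∀ n, 1 ≤ n → Γ (n + 1) - Γ n ≤ -(δ * s n)) :
    (∀ n, 1 ≤ n → φ n ≤ a ^ n * φ 0 + max (Γ 1) 0 / (1 - a)) ∧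
    (∀ n, 1 ≤ n → δ * ∑ k ∈ Finset.Icc 1 n, s k ≤ φ 0 + max (Γ 1) 0 / (1 - a)) ∧
    Summable (fun n => s (n + 1)) := by
  set M := max (Γ 1) 0
  have ha0 : 0 ≤ a := (ha 1 le_rfl).1.trans (ha 1 le_rfl).2
  have hdec' (n : ℕ) : Γ (n + 2) - Γ (n + 1) ≤ -(δ * s (n + 1)) := hdec (n + 1) (by omega)
  have hΓM (n : ℕ) : Γ (n + 1) ≤ M := by
    have : Antitone fun n => Γ (n + 1) := antitone_nat_of_succ_le fun n => by
      nlinarith [hdec' n, hs (n + 1) (by omega)]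
    exact (this n.zero_le).trans (le_max_left _ _)
  have hstep (n : ℕ) : φ (n + 1) - a * φ n ≤ Γ (n + 1) ∧ -(a * φ n) ≤ Γ (n + 1) := by
    rw [hΓ (n + 1) (by omega), Nat.add_sub_cancel]
    exact sub_mul_le_sub_mul_add_and_neg_mul_le (hφ _) (hφ n) (hψ _ (by omega)) (ha _ (by omega)).2
  have hφM (n : ℕ) : φ n ≤ a ^ n * φ 0 + M / (1 - a) :=
    le_pow_mul_add_div_of_le_mul_add ha0 ha1 (le_max_right _ _)
      (fun n => by linarith [(hstep n).1, hΓM n]) n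
  have hsum (n : ℕ) : δ * ∑ k ∈ range n, s (k + 1) ≤ φ 0 + M / (1 - a) :=
    calc δ * ∑ k ∈ range n, s (k + 1) ≤ Γ 1 - Γ (n + 1) :=
        mul_sum_range_le_sub_of_sub_le (G := fun n => Γ (n + 1)) (t := fun n => s (n + 1)) hdec' n
      _ ≤ a * (a ^ n * φ 0 + M / (1 - a)) + M := by
        nlinarith [(hstep n).2, hφM n, le_max_left (Γ 1) 0]
      _ = a ^ (n + 1) * φ 0 + M / (1 - a) := by
        rw [mul_add_div_one_sub_add ha1.ne, pow_succ', mul_assoc]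
      _ ≤ φ 0 + M / (1 - a) := by
        gcongr
        exact mul_le_of_le_one_left (hφ 0) (pow_le_one₀ ha0 ha1.le)
  refine ⟨fun n _ => hφM n, fun n _ => sum_Icc_one_eq_sum_range_succ s n ▸ hsum n, ?_⟩
  exact summable_of_sum_range_le (c := (φ 0 + M / (1 - a)) / δ) (fun n => hs (n + 1) (by omega))
    fun n => (le_div_iff₀' hδ).2 (hsum n)
end

section
/- Let H be a real Hilbert space, C ⊆ H nonempty, closed and convex, and A : H → H pseudomonotone and L-Lipschitz continuous, satisfying: for any sequence (xₙ) in H with xₙ ⇀ w*, one has ‖Aw*‖ ≤ liminf_{n→∞} ‖Axₙ‖. Let (λₙ) be reals with λₙ ≥ λ̲ for all n and some λ̲ > 0, let (wₙ) be a sequence in H, and for each n let yₙ ∈ C satisfy ⟨wₙ − λₙAwₙ − yₙ, u − yₙ⟩ ≤ 0 for all u ∈ C (i.e. yₙ = P_C(wₙ − λₙAwₙ)). If ‖wₙ − yₙ‖ → 0 and (wₙ) converges weakly to some z ∈ H, then z ∈ C and ⟨Az, u − z⟩ ≥ 0 for all u ∈ C, i.e. z solves VI(A, C). -/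
open Filter
open scoped Topology RealInnerProductSpace

/-! The projection inequality and `‖wₙ − yₙ‖ → 0` give `⟪Awₙ, u − wₙ⟫ ≥ −eₙ` with `eₙ → 0` for
every `u ∈ C`. Moving `u` to `vₙ = u + (eₙ / ‖Awₙ‖²) Awₙ` makes `⟪Awₙ, vₙ − wₙ⟫ ≥ 0`, so
pseudomonotonicity gives `⟪Avₙ, vₙ − wₙ⟫ ≥ 0`. Weak lower semicontinuity of `‖A·‖` keeps `‖Awₙ‖`
away from zero when `Az ≠ 0`, hence `vₙ → u` strongly, and passing to the limit yields Minty's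
inequality `⟪Au, u − z⟫ ≥ 0` on `C`; for continuous `A` this is equivalent to `VI(A, C)`.
That `z ∈ C` follows from `yₙ ⇀ z`, since closed convex sets are weakly sequentially closed. -/

section InnerProductSpace

variable {H : Type*} [NormedAddCommGroup H] [InnerProductSpace ℝ H]

def WeaklyConverges (x : ℕ → H) (z : H) : Prop :=
  ∀ f : H, Tendsto (fun n => ⟪x n, f⟫) atTop (𝓝 ⟪z, f⟫)

def Pseudomonotone (A : H → H) : Prop :=
  ∀ x y : H, 0 ≤ ⟪A x, y - x⟫ → 0 ≤ ⟪A y, y - x⟫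

namespace WeaklyConverges

variable {x y : ℕ → H} {z : H}

theorem exists_norm_le [CompleteSpace H] (hx : WeaklyConverges x z) : ∃ B, ∀ n, ‖x n‖ ≤ B := by
  have hpointwise : ∀ f : H, ∃ c, ∀ n, ‖InnerProductSpace.toDual ℝ H (x n) f‖ ≤ c := fun f => by
    obtain ⟨c, hc⟩ := (hx f).norm.bddAbove_range
    exact ⟨c, fun n => by simpa using hc ⟨n, rfl⟩⟩
  obtain ⟨B, hB⟩ := banach_steinhaus hpointwise
  exact ⟨B, fun n => by simpa using hB n⟩

theorem of_tendsto_norm_sub (hx : WeaklyConverges x z)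
    (hxy : Tendsto (fun n => ‖x n - y n‖) atTop (𝓝 0)) : WeaklyConverges y z := fun f => by
  have hgap : Tendsto (fun n => ⟪x n - y n, f⟫) atTop (𝓝 0) :=
    squeeze_zero_norm (fun n => norm_inner_le_norm _ _) (by simpa using hxy.mul_const ‖f‖)
  simpa [inner_sub_left] using (hx f).sub hgap

theorem tendsto_inner_of_tendsto [CompleteSpace H] (hx : WeaklyConverges x z) {a : ℕ → H} {b : H}
    (ha : Tendsto a atTop (𝓝 b)) : Tendsto (fun n => ⟪a n, x n⟫) atTop (𝓝 ⟪b, z⟫) := by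
  obtain ⟨B, hB⟩ := hx.exists_norm_le
  have hgap : Tendsto (fun n => ⟪a n - b, x n⟫) atTop (𝓝 0) := by
    refine squeeze_zero_norm (fun n => (norm_inner_le_norm _ _).trans
      (mul_le_mul_of_nonneg_left (hB n) (norm_nonneg _))) ?_
    simpa using (tendsto_iff_norm_sub_tendsto_zero.1 ha).mul_const B
  have hlim : Tendsto (fun n => ⟪x n, b⟫) atTop (𝓝 ⟪b, z⟫) := by
    simpa only [real_inner_comm b z] using hx b
  simpa [inner_sub_left, real_inner_comm b] using hgap.add hlim

end WeaklyConverges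

theorem IsClosed.mem_of_weaklyConverges [CompleteSpace H] {C : Set H} (hC : IsClosed C)
    (hCconv : Convex ℝ C) {y : ℕ → H} {z : H} (hyC : ∀ n, y n ∈ C) (hy : WeaklyConverges y z) :
    z ∈ C := by
  by_contra hz
  obtain ⟨f, r, hfz, hfC⟩ := geometric_hahn_banach_point_closed hCconv hC hz
  have hf : ∀ x, f x = ⟪x, (InnerProductSpace.toDual ℝ H).symm f⟫ := fun x => by
    rw [real_inner_comm, InnerProductSpace.toDual_symm_apply]
  have hlim : Tendsto (fun n => f (y n)) atTop (𝓝 (f z)) := by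
    simpa only [hf] using hy ((InnerProductSpace.toDual ℝ H).symm f)
  have : r ≤ f z := ge_of_tendsto hlim (Eventually.of_forall fun n => (hfC _ (hyC n)).le)
  linarith

theorem Convex.inner_nonneg_of_minty {C : Set H} (hC : Convex ℝ C) {A : H → H}
    (hA : Continuous A) {z : H} (hz : z ∈ C) (hminty : ∀ u ∈ C, 0 ≤ ⟪A u, u - z⟫) :
    ∀ u ∈ C, 0 ≤ ⟪A z, u - z⟫ := by
  intro u hu
  set g : ℝ → ℝ := fun t => ⟪A (z + t • (u - z)), u - z⟫
  have hg : Continuous g := by fun_prop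
  have hpos : ∀ᶠ t in 𝓝[>] (0 : ℝ), 0 ≤ g t := by
    filter_upwards [Ioc_mem_nhdsGT zero_lt_one] with t ht
    have h := hminty _ (hC.add_smul_sub_mem hz hu ⟨ht.1.le, ht.2⟩)
    rw [add_sub_cancel_left, real_inner_smul_right] at h
    exact nonneg_of_mul_nonneg_right h ht.1
  simpa [g] using ge_of_tendsto (hg.tendsto 0 |>.mono_left nhdsWithin_le_nhds) hpos

theorem Pseudomonotone.inner_nonneg_of_weaklyConverges [CompleteSpace H] {A : H → H}
    (hA : Pseudomonotone A) {u : H} (hAu : ContinuousAt A u) {w : ℕ → H} {z : H}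
    (hw : WeaklyConverges w z) {δ : ℝ} (hδ : 0 < δ) (hAw : ∀ᶠ n in atTop, δ ≤ ‖A (w n)‖)
    {e : ℕ → ℝ} (he : Tendsto e atTop (𝓝 0)) (hlow : ∀ n, -e n ≤ ⟪A (w n), u - w n⟫) :
    0 ≤ ⟪A u, u - z⟫ := by
  set v : ℕ → H := fun n => u + (e n / ‖A (w n)‖ ^ 2) • A (w n)
  have hv : ∀ n, 0 ≤ ⟪A (v n), v n - w n⟫ := fun n => by
    refine hA _ _ ?_
    rcases eq_or_ne (A (w n)) 0 with h0 | h0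
    · simp [h0]
    have hsplit : v n - w n = (u - w n) + (e n / ‖A (w n)‖ ^ 2) • A (w n) := by
      simp only [v]; abel
    rw [hsplit, inner_add_right, real_inner_smul_right, real_inner_self_eq_norm_sq,
      div_mul_cancel₀ _ (by positivity)]
    linarith [hlow n]
  have hnorm : ∀ n, ‖v n - u‖ = |e n| / ‖A (w n)‖ := fun n => by
    rcases eq_or_ne (A (w n)) 0 with h0 | h0
    · simp [v, h0]
    have : 0 < ‖A (w n)‖ := norm_pos_iff.2 h0
    rw [add_sub_cancel_left, norm_smul, norm_div, norm_pow, norm_norm, Real.norm_eq_abs]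
    field_simp
  have hvu : Tendsto v atTop (𝓝 u) := by
    refine tendsto_iff_norm_sub_tendsto_zero.2 (squeeze_zero' (Eventually.of_forall fun n =>
      norm_nonneg _) ?_ (by simpa using he.abs.div_const δ))
    filter_upwards [hAw] with n hn
    rw [hnorm n]
    exact div_le_div_of_nonneg_left (abs_nonneg _) hδ hn
  have hAv : Tendsto (fun n => A (v n)) atTop (𝓝 (A u)) := hAu.tendsto.comp hvu
  have hlim : Tendsto (fun n => ⟪A (v n), v n - w n⟫) atTop (𝓝 ⟪A u, u - z⟫) := by
    simpa only [inner_sub_right] using (hAv.inner hvu).sub (hw.tendsto_inner_of_tendsto hAv)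
  exact ge_of_tendsto hlim (Eventually.of_forall hv)

theorem neg_le_inner_of_projection {w y u a : H} {lam lamlb : ℝ} (hlamlb : 0 < lamlb)
    (hlam : lamlb ≤ lam) (hproj : ⟪w - lam • a - y, u - y⟫ ≤ 0) :
    -(‖w - y‖ * (‖u - y‖ / lamlb + ‖a‖)) ≤ ⟪a, u - w⟫ := by
  have hproj' : ⟪w - y, u - y⟫ ≤ lam * ⟪a, u - y⟫ := by
    rw [sub_right_comm, inner_sub_left, real_inner_smul_left] at hproj
    linarith
  have hwy : -(‖w - y‖ * ‖u - y‖) ≤ ⟪w - y, u - y⟫ :=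
    neg_le_of_abs_le (abs_real_inner_le_norm _ _)
  have hay : -(‖a‖ * ‖w - y‖) ≤ ⟪a, y - w⟫ := by
    rw [← norm_neg (w - y), neg_sub]
    exact neg_le_of_abs_le (abs_real_inner_le_norm _ _)
  have hscale : -(‖w - y‖ * ‖u - y‖ / lamlb) ≤ ⟪a, u - y⟫ := by
    have h1 : -(‖w - y‖ * ‖u - y‖) / lam ≤ ⟪a, u - y⟫ := by
      rw [div_le_iff₀ (hlamlb.trans_le hlam)]
      linarith
    have h2 : ‖w - y‖ * ‖u - y‖ / lam ≤ ‖w - y‖ * ‖u - y‖ / lamlb :=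
      div_le_div_of_nonneg_left (by positivity) hlamlb hlam
    rw [neg_div] at h1
    linarith
  have hsplit : ⟪a, u - w⟫ = ⟪a, u - y⟫ + ⟪a, y - w⟫ := by
    rw [← inner_add_right, sub_add_sub_cancel]
  rw [hsplit]
  linear_combination hscale + hay

theorem exists_tendsto_zero_neg_le_inner_of_projection {w y a : ℕ → H} {lam : ℕ → ℝ}
    {lamlb : ℝ} (hlamlb : 0 < lamlb) (hlam : ∀ n, lamlb ≤ lam n) {B M : ℝ}
    (hw : ∀ n, ‖w n‖ ≤ B) (ha : ∀ n, ‖a n‖ ≤ M) {u : H}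
    (hproj : ∀ n, ⟪w n - lam n • a n - y n, u - y n⟫ ≤ 0)
    (hwy : Tendsto (fun n => ‖w n - y n‖) atTop (𝓝 0)) :
    ∃ e : ℕ → ℝ, Tendsto e atTop (𝓝 0) ∧ ∀ n, -e n ≤ ⟪a n, u - w n⟫ := by
  obtain ⟨D, hD⟩ := hwy.bddAbove_range
  have hbound : ∀ n, ‖u - y n‖ / lamlb + ‖a n‖ ≤ (‖u‖ + B + D) / lamlb + M := fun n => by
    have huy : ‖u - y n‖ ≤ ‖u‖ + B + D := by
      linarith [norm_sub_le_norm_sub_add_norm_sub u (w n) (y n), norm_sub_le u (w n), hw n,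
        hD ⟨n, rfl⟩]
    gcongr; exact ha n
  refine ⟨fun n => ‖w n - y n‖ * ((‖u‖ + B + D) / lamlb + M), by simpa using hwy.mul_const _,
    fun n => ?_⟩
  refine le_trans ?_ (neg_le_inner_of_projection hlamlb (hlam n) (hproj n))
  exact neg_le_neg (mul_le_mul_of_nonneg_left (hbound n) (norm_nonneg _))

end InnerProductSpace

theorem stmt_13_general
    {H : Type*} [NormedAddCommGroup H] [InnerProductSpace ℝ H] [CompleteSpace H]
    (C : Set H) (hCclosed : IsClosed C) (hCconv : Convex ℝ C)
    (L : ℝ) (A : H → H)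
    (hApseudo : ∀ x y : H, 0 ≤ ⟪A x, y - x⟫ → 0 ≤ ⟪A y, y - x⟫)
    (hALip : ∀ x y : H, ‖A x - A y‖ ≤ L * ‖x - y‖)
    (hAweak : ∀ (x : ℕ → H) (wstar : H),
      (∀ f : H, Tendsto (fun n => ⟪x n, f⟫) atTop (𝓝 ⟪wstar, f⟫)) →
      ‖A wstar‖ ≤ liminf (fun n => ‖A (x n)‖) atTop)
    (lam : ℕ → ℝ) (lamlb : ℝ) (hlamlb : 0 < lamlb) (hlam : ∀ n, lamlb ≤ lam n)
    (w y : ℕ → H)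
    (hyC : ∀ n, y n ∈ C)
    (hproj : ∀ n, ∀ u ∈ C, ⟪w n - lam n • A (w n) - y n, u - y n⟫ ≤ 0)
    (z : H)
    (hwy : Tendsto (fun n => ‖w n - y n‖) atTop (𝓝 0))
    (hweak : ∀ f : H, Tendsto (fun n => ⟪w n, f⟫) atTop (𝓝 ⟪z, f⟫)) :
    z ∈ C ∧ ∀ u ∈ C, 0 ≤ ⟪A z, u - z⟫ := by
  have hALip' : LipschitzWith L.toNNReal A := .of_dist_le_mul fun x y => by
    simpa only [dist_eq_norm] using (hALip x y).trans
      (mul_le_mul_of_nonneg_right (Real.le_coe_toNNReal L) (norm_nonneg _))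
  obtain ⟨B, hB⟩ := WeaklyConverges.exists_norm_le hweak
  obtain ⟨M, hM⟩ : ∃ M, ∀ n, ‖A (w n)‖ ≤ M := by
    obtain ⟨M, hM⟩ := isBounded_iff_forall_norm_le.1 <| hALip'.isBounded_image <|
      isBounded_iff_forall_norm_le.2 ⟨B, Set.forall_mem_range.2 hB⟩
    exact ⟨M, fun n => hM _ ⟨w n, ⟨n, rfl⟩, rfl⟩⟩
  have hzC : z ∈ C := hCclosed.mem_of_weaklyConverges hCconv hyC
    (WeaklyConverges.of_tendsto_norm_sub hweak hwy)
  refine ⟨hzC, ?_⟩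
  rcases eq_or_ne (A z) 0 with hAz | hAz
  · simp [hAz]
  have hAw : ∀ᶠ n in atTop, ‖A z‖ / 2 ≤ ‖A (w n)‖ :=
    (eventually_lt_of_lt_liminf ((half_lt_self (norm_pos_iff.2 hAz)).trans_le (hAweak w z hweak))
      (isBoundedUnder_of ⟨0, fun n => norm_nonneg _⟩)).mono fun n => le_of_lt
  refine hCconv.inner_nonneg_of_minty hALip'.continuous hzC fun u hu => ?_
  obtain ⟨e, he, hlow⟩ := exists_tendsto_zero_neg_le_inner_of_projection hlamlb hlam hB hM
    (fun n => hproj n u hu) hwy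
  exact Pseudomonotone.inner_nonneg_of_weaklyConverges hApseudo hALip'.continuous.continuousAt
    hweak (half_pos (norm_pos_iff.2 hAz)) hAw he hlow

/-- Proposition 3.2: any weak cluster point of the iterates (along which
`‖wₙ − yₙ‖ → 0`) solves the variational inequality `VI(A, C)`. -/
theorem stmt_13
    {H : Type*} [NormedAddCommGroup H] [InnerProductSpace ℝ H] [CompleteSpace H]
    (C : Set H) (hCne : C.Nonempty) (hCclosed : IsClosed C) (hCconv : Convex ℝ C)
    (L : ℝ) (A : H → H)
    (hApseudo : ∀ x y : H, 0 ≤ ⟪A x, y - x⟫ → 0 ≤ ⟪A y, y - x⟫)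
    (hALip : ∀ x y : H, ‖A x - A y‖ ≤ L * ‖x - y‖)
    (hAweak : ∀ (x : ℕ → H) (wstar : H),
      (∀ f : H, Tendsto (fun n => ⟪x n, f⟫) atTop (𝓝 ⟪wstar, f⟫)) →
      ‖A wstar‖ ≤ liminf (fun n => ‖A (x n)‖) atTop)
    (lam : ℕ → ℝ) (lamlb : ℝ) (hlamlb : 0 < lamlb) (hlam : ∀ n, lamlb ≤ lam n)
    (w y : ℕ → H)
    (hyC : ∀ n, y n ∈ C)
    (hproj : ∀ n, ∀ u ∈ C, ⟪w n - lam n • A (w n) - y n, u - y n⟫ ≤ 0)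
    (z : H)
    (hwy : Tendsto (fun n => ‖w n - y n‖) atTop (𝓝 0))
    (hweak : ∀ f : H, Tendsto (fun n => ⟪w n, f⟫) atTop (𝓝 ⟪z, f⟫)) :
    z ∈ C ∧ ∀ u ∈ C, 0 ≤ ⟪A z, u - z⟫ :=
  stmt_13_general C hCclosed hCconv L A hApseudo hALip hAweak lam lamlb hlamlb hlam w y hyC hproj z
    hwy hweak
end
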